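/- arXiv:1308.4997 — 5 statements merged into one kernel-verified Lean document; each statement's English description precedes it below -/
import Mathlib

section
/- Let n be a natural number and let X : EuclideanSpace ℝ (Fin n) → EuclideanSpace ℝ (Fin n) be a Killing field, i.e. X is smooth and for all points x and all vectors u, v one has ⟪fderiv ℝ X x u, v⟫ + ⟪fderiv ℝ X x v, u⟫ = 0. Then for every point p, every vector v, and every real t, one has X (p + t • v) = X p + t • (fderiv ℝ X p v); that is, X restricted to any straight line (geodesic of flat space) is an affine function of the parameter. -/
open scoped RealInnerProductSpace

/-- A Killing field on flat Euclidean space is affine along every straight line. -/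
theorem killing_field_affine_along_lines (n : ℕ)
    (X : EuclideanSpace ℝ (Fin n) → EuclideanSpace ℝ (Fin n))
    (hX : ContDiff ℝ (⊤ : ℕ∞) X)
    (hskew : ∀ (x u v : EuclideanSpace ℝ (Fin n)),
      ⟪fderiv ℝ X x u, v⟫ + ⟪fderiv ℝ X x v, u⟫ = 0) :
    ∀ (p v : EuclideanSpace ℝ (Fin n)) (t : ℝ),
      X (p + t • v) = X p + t • (fderiv ℝ X p v) := by
  have hXd : Differentiable ℝ X := hX.differentiable (by simp)
  have hA : ContDiff ℝ (⊤ : ℕ∞) (fderiv ℝ X) := hX.fderiv_right (by simp)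
  have hAd : Differentiable ℝ (fderiv ℝ X) := hA.differentiable (by simp)
  set f2 : EuclideanSpace ℝ (Fin n) → EuclideanSpace ℝ (Fin n) →L[ℝ] EuclideanSpace ℝ (Fin n) →L[ℝ] EuclideanSpace ℝ (Fin n) := fun x => fderiv ℝ (fderiv ℝ X) x with hf2
  -- symmetry of the second derivative
  have hsymm : ∀ x u w : EuclideanSpace ℝ (Fin n), f2 x u w = f2 x w u := fun x u w =>
    second_derivative_symmetric (fun y => (hXd y).hasFDerivAt) ((hAd x).hasFDerivAt) u w
  -- derivative of the skew identity
  have hkey : ∀ x u v w : EuclideanSpace ℝ (Fin n), ⟪f2 x w u, v⟫ + ⟪f2 x w v, u⟫ = 0 := by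
    intro x u v w
    set Φ : EuclideanSpace ℝ (Fin n) → EuclideanSpace ℝ (Fin n) → ((EuclideanSpace ℝ (Fin n) →L[ℝ] EuclideanSpace ℝ (Fin n)) →L[ℝ] ℝ) := fun u v =>
      (innerSL ℝ v).comp (ContinuousLinearMap.apply ℝ (EuclideanSpace ℝ (Fin n)) u) with hΦ
    have h1 : HasFDerivAt (fun y => Φ u v (fderiv ℝ X y) + Φ v u (fderiv ℝ X y))
        (((Φ u v).comp (f2 x)) + ((Φ v u).comp (f2 x))) x :=
      (((Φ u v).hasFDerivAt.comp x (hAd x).hasFDerivAt).add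
        ((Φ v u).hasFDerivAt.comp x (hAd x).hasFDerivAt))
    have h0 : (fun y => Φ u v (fderiv ℝ X y) + Φ v u (fderiv ℝ X y)) = fun _ => (0:ℝ) := by
      funext y
      simp only [hΦ, ContinuousLinearMap.comp_apply, ContinuousLinearMap.apply_apply,
        innerSL_apply_apply]
      have h := hskew y u v
      linarith [real_inner_comm v ((fderiv ℝ X y) u), real_inner_comm u ((fderiv ℝ X y) v)]
    rw [h0] at h1
    have := h1.unique (hasFDerivAt_const 0 x)
    have h2 := congrArg (fun (L : EuclideanSpace ℝ (Fin n) →L[ℝ] ℝ) => L w) this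
    have h3 : ⟪v, f2 x w u⟫ + ⟪u, f2 x w v⟫ = 0 := by simpa [hΦ] using h2
    linarith [real_inner_comm v (f2 x w u), real_inner_comm u (f2 x w v)]
  -- braid argument: second derivative vanishes
  have hzero : ∀ x : EuclideanSpace ℝ (Fin n), f2 x = 0 := by
    intro x
    have T : ∀ u v w : EuclideanSpace ℝ (Fin n), ⟪f2 x u v, w⟫ = 0 := by
      intro u v w
      have e1 : ∀ a b c : EuclideanSpace ℝ (Fin n), ⟪f2 x a b, c⟫ = -⟪f2 x a c, b⟫ := by
        intro a b c
        have := hkey x b c a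
        linarith
      have e2 : ∀ a b c : EuclideanSpace ℝ (Fin n), ⟪f2 x a b, c⟫ = ⟪f2 x b a, c⟫ := by
        intro a b c; rw [hsymm x a b]
      have : ⟪f2 x u v, w⟫ = -⟪f2 x u v, w⟫ := by
        calc ⟪f2 x u v, w⟫ = -⟪f2 x u w, v⟫ := e1 u v w
          _ = -⟪f2 x w u, v⟫ := by rw [e2 u w v]
          _ = ⟪f2 x w v, u⟫ := by rw [e1 w u v]; ring_nf
          _ = ⟪f2 x v w, u⟫ := e2 w v u
          _ = -⟪f2 x v u, w⟫ := e1 v w u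
          _ = -⟪f2 x u v, w⟫ := by rw [e2 v u w]
      linarith
    ext u v
    have hv : f2 x u v = 0 := by
      have := T u v (f2 x u v)
      exact inner_self_eq_zero.mp this
    simp [hv]
  -- fderiv X is constant
  intro p v t
  have hconst : ∀ x : EuclideanSpace ℝ (Fin n), fderiv ℝ X x = fderiv ℝ X p := fun x =>
    is_const_of_fderiv_eq_zero hAd (fun y => hzero y) x p
  set c : EuclideanSpace ℝ (Fin n) := fderiv ℝ X p v with hc
  -- the function along the line minus the affine part is constant
  set γ : ℝ → EuclideanSpace ℝ (Fin n) := fun s => X (p + s • v) - s • c with hγ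
  have hγd : ∀ s : ℝ, HasDerivAt γ 0 s := by
    intro s
    have hline : HasDerivAt (fun s : ℝ => p + s • v) v s := by
      simpa using ((hasDerivAt_id s).smul_const v).const_add p
    have h1 : HasDerivAt (fun s : ℝ => X (p + s • v)) (fderiv ℝ X (p + s • v) v) s :=
      (hXd (p + s • v)).hasFDerivAt.comp_hasDerivAt s hline
    rw [hconst (p + s • v)] at h1
    have h2 : HasDerivAt (fun s : ℝ => s • c) c s := by
      simpa using (hasDerivAt_id s).smul_const c
    have h3 := h1.sub h2
    rw [← hc, sub_self] at h3
    exact h3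
  have hγc : γ t = γ 0 :=
    is_const_of_deriv_eq_zero (fun s => (hγd s).differentiableAt)
      (fun s => (hγd s).deriv) t 0
  have := hγc
  simp only [hγ, zero_smul, add_zero, sub_zero] at this
  have h := this
  have : X (p + t • v) = X p + t • c := by
    have : X (p + t • v) - t • c = X p := h
    linear_combination (norm := module) this
  simpa [hc] using this
end

section
/- Let n be a natural number and let X : EuclideanSpace ℝ (Fin n) → EuclideanSpace ℝ (Fin n) be a Killing field, i.e. X is smooth and for all points x and all vectors u, v one has ⟪fderiv ℝ X x u, v⟫ + ⟪fderiv ℝ X x v, u⟫ = 0. Then for every point p and every real r ≥ 0 there exists a point q with ‖q − p‖ ≤ r and ‖X q‖ ≥ r * ‖fderiv ℝ X p‖ − ‖X p‖, where ‖fderiv ℝ X p‖ denotes the operator norm of the derivative of X at p. -/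
open scoped RealInnerProductSpace

/-- Quantitative linear growth of a Killing field on flat Euclidean space. -/
theorem killing_field_linear_growth (n : ℕ)
    (X : EuclideanSpace ℝ (Fin n) → EuclideanSpace ℝ (Fin n))
    (hX : ContDiff ℝ (⊤ : ℕ∞) X)
    (hskew : ∀ (x u v : EuclideanSpace ℝ (Fin n)),
      ⟪fderiv ℝ X x u, v⟫ + ⟪fderiv ℝ X x v, u⟫ = 0) :
    ∀ (p : EuclideanSpace ℝ (Fin n)) (r : ℝ), 0 ≤ r →
      ∃ q : EuclideanSpace ℝ (Fin n),
        ‖q - p‖ ≤ r ∧ ‖X q‖ ≥ r * ‖fderiv ℝ X p‖ - ‖X p‖ := by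
  intro p r hr
  have hXd : Differentiable ℝ X := hX.differentiable (by simp)
  have hDcd : ContDiff ℝ (⊤ : ℕ∞) (fderiv ℝ X) := hX.fderiv_right (by simp)
  have hDd : Differentiable ℝ (fderiv ℝ X) := hDcd.differentiable (by simp)
  -- antisymmetry of the second derivative in the last two arguments
  have anti : ∀ (x u v w : EuclideanSpace ℝ (Fin n)),
      ⟪fderiv ℝ (fderiv ℝ X) x u v, w⟫ + ⟪fderiv ℝ (fderiv ℝ X) x u w, v⟫ = 0 := by
    intro x u v w
    have key : ∀ v w : EuclideanSpace ℝ (Fin n),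
        HasFDerivAt (fun y => ⟪fderiv ℝ X y v, w⟫)
        (((innerSL ℝ w).comp (ContinuousLinearMap.apply ℝ (EuclideanSpace ℝ (Fin n)) v)).comp
          (fderiv ℝ (fderiv ℝ X) x)) x := by
      intro v w
      have h1 : HasFDerivAt (fderiv ℝ X) (fderiv ℝ (fderiv ℝ X) x) x :=
        (hDd x).hasFDerivAt
      have h2 := (((innerSL ℝ w).comp
        (ContinuousLinearMap.apply ℝ (EuclideanSpace ℝ (Fin n)) v)).hasFDerivAt.comp x h1)
      refine h2.congr_of_eventuallyEq (Filter.Eventually.of_forall fun y => ?_)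
      simp only [Function.comp_apply, ContinuousLinearMap.comp_apply,
        ContinuousLinearMap.apply_apply, innerSL_apply_apply]
      exact real_inner_comm _ _
    have hzero : (fun y => ⟪fderiv ℝ X y v, w⟫ + ⟪fderiv ℝ X y w, v⟫)
        = fun _ => (0:ℝ) := by
      funext y; exact hskew y v w
    have hsum := (key v w).add (key w v)
    rw [show ((fun y => ⟪fderiv ℝ X y v, w⟫) + fun y => ⟪fderiv ℝ X y w, v⟫) = fun _ => (0:ℝ) from hzero] at hsum
    have := hsum.unique (hasFDerivAt_const 0 x)
    have h0 := congrFun (congrArg DFunLike.coe this) u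
    simp only [ContinuousLinearMap.add_apply, ContinuousLinearMap.comp_apply,
      ContinuousLinearMap.apply_apply, innerSL_apply_apply, ContinuousLinearMap.zero_apply] at h0
    have c1 := real_inner_comm w (fderiv ℝ (fderiv ℝ X) x u v)
    have c2 := real_inner_comm v (fderiv ℝ (fderiv ℝ X) x u w)
    linarith
  -- symmetry of the second derivative in the first two arguments
  have symm : ∀ (x u v : EuclideanSpace ℝ (Fin n)),
      fderiv ℝ (fderiv ℝ X) x u v = fderiv ℝ (fderiv ℝ X) x v u := by
    intro x u v
    exact (hX.contDiffAt.isSymmSndFDerivAt (by rw [minSmoothness_of_isRCLikeNormedField]; exact WithTop.coe_le_coe.mpr (le_top : (2:ℕ∞) ≤ ⊤))) u v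
  -- braid: second derivative vanishes
  have T0 : ∀ (x u v w : EuclideanSpace ℝ (Fin n)),
      ⟪fderiv ℝ (fderiv ℝ X) x u v, w⟫ = 0 := by
    intro x u v w
    set T : EuclideanSpace ℝ (Fin n) → EuclideanSpace ℝ (Fin n) →
        EuclideanSpace ℝ (Fin n) → ℝ :=
      fun a b c => ⟪fderiv ℝ (fderiv ℝ X) x a b, c⟫ with hT
    have ha : ∀ a b c, T a b c = -T a c b := by
      intro a b c; have := anti x a b c; linarith
    have hs : ∀ a b c, T a b c = T b a c := by
      intro a b c; simp only [hT]; rw [symm x a b]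
    have : T u v w = - T u v w := by
      calc T u v w = -T u w v := ha u v w
        _ = -T w u v := by rw [hs u w]
        _ = T w v u := by rw [ha w u v, neg_neg]
        _ = T v w u := by rw [hs w v]
        _ = -T v u w := by rw [ha v w u]
        _ = -T u v w := by rw [hs v u]
    linarith
  have D2zero : ∀ x : EuclideanSpace ℝ (Fin n), fderiv ℝ (fderiv ℝ X) x = 0 := by
    intro x
    apply ContinuousLinearMap.ext; intro u
    apply ContinuousLinearMap.ext; intro v
    simp only [ContinuousLinearMap.zero_apply]
    exact inner_self_eq_zero.mp (T0 x u v _)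
  -- the derivative is constant
  have Dconst : ∀ x : EuclideanSpace ℝ (Fin n), fderiv ℝ X x = fderiv ℝ X p := fun x =>
    is_const_of_fderiv_eq_zero hDd D2zero x p
  set A := fderiv ℝ X p with hA
  -- X is affine: X q = X p + A (q - p)
  have affine : ∀ q : EuclideanSpace ℝ (Fin n), X q = X p + A (q - p) := by
    intro q
    have hYd : Differentiable ℝ (fun y => X y - A y) := hXd.sub A.differentiable
    have hY0 : ∀ y : EuclideanSpace ℝ (Fin n), fderiv ℝ (fun y => X y - A y) y = 0 := by
      intro y
      rw [fderiv_fun_sub (hXd y) (A.differentiableAt)]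
      rw [A.fderiv, Dconst y]
      simp
    have hc : X q - A q = X p - A p := is_const_of_fderiv_eq_zero hYd hY0 q p
    have hmap : A (q - p) = A q - A p := map_sub A q p
    rw [hmap]
    rw [sub_eq_sub_iff_sub_eq_sub] at hc
    linear_combination (norm := abel) hc
  -- choose a maximizing direction on the closed unit ball
  obtain ⟨u, hu, hmax⟩ := (isCompact_closedBall (0:EuclideanSpace ℝ (Fin n)) 1).exists_isMaxOn
    ⟨0, Metric.mem_closedBall_self zero_le_one⟩
    (continuous_norm.comp A.continuous).continuousOn
  have hunorm : ‖u‖ ≤ 1 := by simpa using hu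
  have hAle : ‖A‖ ≤ ‖A u‖ := by
    refine A.opNorm_le_bound (norm_nonneg _) fun x => ?_
    rcases eq_or_ne x 0 with hx | hx
    · simp [hx]
    · have hxpos : (0:ℝ) < ‖x‖ := norm_pos_iff.mpr hx
      have hmem : ‖x‖⁻¹ • x ∈ Metric.closedBall (0:EuclideanSpace ℝ (Fin n)) 1 := by
        rw [Metric.mem_closedBall, dist_zero_right, norm_smul, norm_inv, norm_norm,
          inv_mul_cancel₀ hxpos.ne']
      have hb : ‖A (‖x‖⁻¹ • x)‖ ≤ ‖A u‖ := hmax hmem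
      rw [map_smul, norm_smul, norm_inv, norm_norm] at hb
      calc ‖A x‖ = ‖x‖ * (‖x‖⁻¹ * ‖A x‖) := by field_simp
        _ ≤ ‖x‖ * ‖A u‖ := mul_le_mul_of_nonneg_left hb hxpos.le
        _ = ‖A u‖ * ‖x‖ := mul_comm _ _
  refine ⟨p + r • u, ?_, ?_⟩
  · rw [add_sub_cancel_left, norm_smul, Real.norm_eq_abs, abs_of_nonneg hr]
    calc r * ‖u‖ ≤ r * 1 := mul_le_mul_of_nonneg_left hunorm hr
      _ = r := mul_one r
  · have hq := affine (p + r • u)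
    have h4 : (p + r • u) - p = r • u := by abel
    rw [h4] at hq
    have h5 : ‖A (r • u)‖ = r * ‖A u‖ := by
      rw [map_smul, norm_smul, Real.norm_eq_abs, abs_of_nonneg hr]
    have h1 : ‖A (r • u)‖ ≤ ‖X p + A (r • u)‖ + ‖X p‖ := by
      have h := norm_sub_le (X p + A (r • u)) (X p)
      have h3 : (X p + A (r • u)) - X p = A (r • u) := by abel
      rw [h3] at h
      linarith
    have h6 : r * ‖A‖ ≤ r * ‖A u‖ := mul_le_mul_of_nonneg_left hAle hr
    rw [hq]
    rw [h5] at h1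
    simp only [ge_iff_le]
    linarith
end

section
/- Let X : EuclideanSpace ℝ (Fin 4) → EuclideanSpace ℝ (Fin 4) be a Killing field, i.e. X is smooth and for all points x and all vectors u, v one has ⟪fderiv ℝ X x u, v⟫ + ⟪fderiv ℝ X x v, u⟫ = 0. Suppose X is not identically zero and X p = 0 for some point p. Then there is an affine subspace S of EuclideanSpace ℝ (Fin 4) whose underlying set equals the zero set {x | X x = 0}, and the dimension of the direction of S is either 0 or 2. -/
open scoped RealInnerProductSpace Matrix

theorem skew_ker_dim {E : Type*} [NormedAddCommGroup E] [InnerProductSpace ℝ E]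
    [FiniteDimensional ℝ E] (hdim : Module.finrank ℝ E = 4)
    (A : E →ₗ[ℝ] E) (hA : ∀ u v, ⟪A u, v⟫ + ⟪A v, u⟫ = 0) (hA0 : A ≠ 0) :
    Module.finrank ℝ (LinearMap.ker A) = 0 ∨ Module.finrank ℝ (LinearMap.ker A) = 2 := by
  set K := (LinearMap.ker A)ᗮ with hK
  have hmaps : ∀ x ∈ K, A x ∈ K := by
    intro x hx
    rw [Submodule.mem_orthogonal]
    intro v hv
    have := hA v x
    rw [LinearMap.mem_ker.mp hv] at this
    rw [real_inner_comm]
    simpa [inner_zero_left] using this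
  set B : K →ₗ[ℝ] K := A.restrict hmaps with hB
  have hBinj : Function.Injective B := by
    rw [← LinearMap.ker_eq_bot, Submodule.eq_bot_iff]
    rintro ⟨x, hxK⟩ hx
    have hx0 : A x = 0 := congrArg Subtype.val hx
    have : x ∈ LinearMap.ker A ⊓ (LinearMap.ker A)ᗮ := ⟨hx0, hxK⟩
    rw [Submodule.inf_orthogonal_eq_bot] at this
    simpa using this
  have hdet : LinearMap.det B ≠ 0 := by
    have hbij : Function.Bijective B :=
      ⟨hBinj, (LinearMap.injective_iff_surjective).mp hBinj⟩
    exact (LinearEquiv.ofBijective B hbij).isUnit_det'.ne_zero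
  -- matrix of B in an orthonormal basis is skew-symmetric
  set n := Module.finrank ℝ K with hn
  set b := stdOrthonormalBasis ℝ K with hb
  set M := LinearMap.toMatrix b.toBasis b.toBasis B with hM
  have hMskew : Mᵀ = -M := by
    ext i j
    have h1 : M j i = ⟪b j, B (b i)⟫ := by
      rw [hM, LinearMap.toMatrix_apply, OrthonormalBasis.coe_toBasis_repr_apply,
        b.repr_apply_apply, OrthonormalBasis.coe_toBasis]
    have h2 : M i j = ⟪b i, B (b j)⟫ := by
      rw [hM, LinearMap.toMatrix_apply, OrthonormalBasis.coe_toBasis_repr_apply,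
        b.repr_apply_apply, OrthonormalBasis.coe_toBasis]
    have key : ⟪(B (b j) : E), (b i : E)⟫ + ⟪(B (b i) : E), (b j : E)⟫ = 0 := hA _ _
    have : ⟪b j, B (b i)⟫ = -⟪b i, B (b j)⟫ := by
      have e1 : ⟪b j, B (b i)⟫ = ⟪(b j : E), (B (b i) : E)⟫ := rfl
      have e2 : ⟪b i, B (b j)⟫ = ⟪(b i : E), (B (b j) : E)⟫ := rfl
      rw [e1, e2]
      linarith [key, real_inner_comm ((b j : E)) ((B (b i) : E)),
        real_inner_comm ((b i : E)) ((B (b j) : E))]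
    simp [Matrix.transpose_apply, h1, h2, this]
  -- so n is even
  have hMdet : M.det ≠ 0 := by rw [hM, LinearMap.det_toMatrix]; exact hdet
  have heven : Even n := by
    by_contra hodd
    rw [Nat.not_even_iff_odd] at hodd
    have : M.det = -M.det := by
      conv_lhs => rw [← Matrix.det_transpose, hMskew, Matrix.det_neg]
      rw [Fintype.card_fin, show ((-1 : ℝ) ^ Module.finrank ℝ K) = -1 from hodd.neg_one_pow]; ring
    have : M.det = 0 := by linarith
    exact hMdet this
  -- finrank ker + n = 4
  have hsum : Module.finrank ℝ (LinearMap.ker A) + n = 4 := by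
    rw [hn, hK]
    rw [Submodule.finrank_add_finrank_orthogonal, hdim]
  have hnpos : 0 < n := by
    rcases Nat.eq_zero_or_pos n with h0 | h
    · exfalso
      have : K = ⊥ := Submodule.finrank_eq_zero.mp (by rw [← hn]; exact h0)
      rw [hK, Submodule.orthogonal_eq_bot_iff] at this
      apply hA0
      ext x
      simpa using LinearMap.mem_ker.mp (this ▸ Submodule.mem_top : x ∈ LinearMap.ker A)
    · exact h
  have hnle : n ≤ 4 := by omega
  obtain ⟨k, hk⟩ := heven
  interval_cases n <;> omega

section
variable {E : Type*} [NormedAddCommGroup E] [InnerProductSpace ℝ E]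

-- second derivative vanishes
theorem killing_snd_deriv_zero
    (X : E → E) (hX : ContDiff ℝ (⊤ : ℕ∞) X)
    (hskew : ∀ (x u v : E), ⟪fderiv ℝ X x u, v⟫ + ⟪fderiv ℝ X x v, u⟫ = 0)
    (x : E) : fderiv ℝ (fderiv ℝ X) x = 0 := by
  have hf : ContDiff ℝ (⊤ : ℕ∞) (fderiv ℝ X) := hX.fderiv_right (by simp)
  set B := fderiv ℝ (fderiv ℝ X) x with hBdef
  have hsym : ∀ u w, B u w = B w u := by
    intro u w
    exact (hX.contDiffAt.isSymmSndFDerivAt (by rw [minSmoothness_of_isRCLikeNormedField]; exact WithTop.coe_le_coe.mpr le_top)) u w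
  have hskew2 : ∀ w u v, ⟪B w u, v⟫ + ⟪B w v, u⟫ = 0 := by
    intro w u v
    set φ : (E →L[ℝ] E) →L[ℝ] ℝ :=
      ((innerSL ℝ v).comp ((ContinuousLinearMap.apply ℝ E) u)) +
      ((innerSL ℝ u).comp ((ContinuousLinearMap.apply ℝ E) v)) with hφ
    have hφapp : ∀ T : E →L[ℝ] E, φ T = ⟪T u, v⟫ + ⟪T v, u⟫ := by
      intro T
      simp [hφ, real_inner_comm]
    have hcomp : HasFDerivAt (fun y => φ (fderiv ℝ X y)) (φ.comp B) x :=
      HasFDerivAt.comp x (φ.hasFDerivAt (x := fderiv ℝ X x)) (hf.differentiable (by simp) x).hasFDerivAt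
    have hzero : (fun y => φ (fderiv ℝ X y)) = fun _ => (0 : ℝ) := by
      funext y
      rw [hφapp]
      exact hskew y u v
    have : φ.comp B = 0 := by
      have h0 : HasFDerivAt (fun _ : E => (0 : ℝ)) (0 : E →L[ℝ] ℝ) x := hasFDerivAt_const _ _
      rw [hzero] at hcomp
      exact hcomp.unique h0
    have := congrFun (congrArg (fun (T : E →L[ℝ] ℝ) => (T : E → ℝ)) this) w
    simpa [hφapp] using this
  have key : ∀ u v, B u v = 0 := by
    intro u v
    have h1 : ∀ w, ⟪B u v, w⟫ = 0 := by
      intro w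
      have a1 := hskew2 u v w   -- ⟪B u v, w⟫ = -⟪B u w, v⟫
      have a2 := hskew2 w u v
      have a3 := hskew2 v w u
      have s1 := hsym u w
      have s2 := hsym w v
      have s3 := hsym v u
      -- braid
      have e1 : ⟪B u v, w⟫ = -⟪B u w, v⟫ := by linarith
      rw [s1] at e1
      have e2 : ⟪B w u, v⟫ = -⟪B w v, u⟫ := by linarith
      rw [s2] at e2
      have e3 : ⟪B v w, u⟫ = -⟪B v u, w⟫ := by linarith
      rw [s3] at e3
      linarith
    have := h1 (B u v)
    exact inner_self_eq_zero.mp this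
  ext u v
  simp [key u v]

end

/-- The zero locus of a nontrivial Killing field on flat ℝ⁴ having a zero is an
affine subspace of dimension 0 or 2. -/
theorem killing_field_zero_set_dim_zero_or_two
    (X : EuclideanSpace ℝ (Fin 4) → EuclideanSpace ℝ (Fin 4))
    (hX : ContDiff ℝ (⊤ : ℕ∞) X)
    (hskew : ∀ (x u v : EuclideanSpace ℝ (Fin 4)),
      ⟪fderiv ℝ X x u, v⟫ + ⟪fderiv ℝ X x v, u⟫ = 0)
    (hnz : ¬ ∀ x, X x = 0)
    (p : EuclideanSpace ℝ (Fin 4)) (hp : X p = 0) :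
    ∃ S : AffineSubspace ℝ (EuclideanSpace ℝ (Fin 4)),
      (S : Set (EuclideanSpace ℝ (Fin 4))) = {x | X x = 0} ∧
      (Module.finrank ℝ S.direction = 0 ∨ Module.finrank ℝ S.direction = 2) := by
  have hsnd := killing_snd_deriv_zero X hX hskew
  have hfdiff : Differentiable ℝ (fderiv ℝ X) :=
    (hX.fderiv_right (m := 1) (WithTop.coe_le_coe.mpr le_top)).differentiable (by simp)
  have hconst : ∀ x, fderiv ℝ X x = fderiv ℝ X p := fun x =>
    is_const_of_fderiv_eq_zero hfdiff hsnd x p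
  set A := fderiv ℝ X p with hA
  have hXdiff : Differentiable ℝ X := hX.differentiable (by simp)
  have haff : ∀ x, X x = A (x - p) := by
    intro x
    have hd : ∀ y, fderiv ℝ (fun z => X z - A z) y = 0 := by
      intro y
      have h1 : HasFDerivAt (fun z => X z - A z) (fderiv ℝ X y - A) y :=
        (hXdiff y).hasFDerivAt.sub A.hasFDerivAt
      rw [hconst y] at h1
      simpa using h1.fderiv
    have hc := is_const_of_fderiv_eq_zero
      (fun y => ((hXdiff y).sub (A.differentiable y))) hd x p
    rw [Pi.sub_apply, Pi.sub_apply, hp] at hc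
    have : X x = A x - A p := by
      have := hc
      abel_nf at this ⊢
      linear_combination (norm := abel) this
    rw [this, map_sub]
  have hAskew : ∀ u v : EuclideanSpace ℝ (Fin 4), ⟪A.toLinearMap u, v⟫ + ⟪A.toLinearMap v, u⟫ = 0 := by
    intro u v; exact hskew p u v
  have hA0 : A.toLinearMap ≠ 0 := by
    intro h0
    apply hnz
    intro x
    rw [haff x]
    have : A (x - p) = A.toLinearMap (x - p) := rfl
    rw [this, h0]
    rfl
  refine ⟨AffineSubspace.mk' p (LinearMap.ker A.toLinearMap), ?_, ?_⟩
  · ext x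
    simp only [SetLike.mem_coe, AffineSubspace.mem_mk', Set.mem_setOf_eq]
    rw [haff x]
    constructor
    · intro h; exact h
    · intro h; exact h
  · rw [AffineSubspace.direction_mk']
    exact skew_ker_dim (by simp) A.toLinearMap hAskew hA0
end

section
/- Let X : EuclideanSpace ℝ (Fin 4) → EuclideanSpace ℝ (Fin 4) be a Killing field, i.e. X is smooth and for all points x and all vectors u, v one has ⟪fderiv ℝ X x u, v⟫ + ⟪fderiv ℝ X x v, u⟫ = 0. Suppose X is not identically zero and X vanishes on a 2-dimensional affine subspace W (that is, X p = 0 for all p ∈ W and the direction of W has dimension 2). Then X is a rotation about the axis W: for any p ∈ W, letting A := fderiv ℝ X p, one has X x = A (x − p) for all x, the rank of A equals 2, and the kernel of A equals the direction space of W. -/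
open scoped RealInnerProductSpace

/-- A nontrivial Killing field on flat ℝ⁴ vanishing on a 2-dimensional affine
subspace `W` is a rotation about the axis `W`. -/
theorem killing_field_rotation_about_plane
    (X : EuclideanSpace ℝ (Fin 4) → EuclideanSpace ℝ (Fin 4))
    (hX : ContDiff ℝ (⊤ : ℕ∞) X)
    (hskew : ∀ (x u v : EuclideanSpace ℝ (Fin 4)),
      ⟪fderiv ℝ X x u, v⟫ + ⟪fderiv ℝ X x v, u⟫ = 0)
    (hnz : ¬ ∀ x, X x = 0)
    (W : AffineSubspace ℝ (EuclideanSpace ℝ (Fin 4)))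
    (hW : ∀ p ∈ W, X p = 0)
    (hdim : Module.finrank ℝ W.direction = 2) :
    ∀ p ∈ W,
      (∀ x, X x = fderiv ℝ X p (x - p)) ∧
      Module.finrank ℝ (LinearMap.range ((fderiv ℝ X p).toLinearMap)) = 2 ∧
      LinearMap.ker ((fderiv ℝ X p).toLinearMap) = W.direction := by
  have hX1 : Differentiable ℝ X := hX.differentiable (by simp)
  have hX' : ContDiff ℝ (⊤ : ℕ∞) (fun x => fderiv ℝ X x) := hX.fderiv_right (by simp)
  have hX'd : Differentiable ℝ (fun x => fderiv ℝ X x) := hX'.differentiable (by simp)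
  -- the second derivative is skew in its last two arguments
  have key : ∀ x u v w : (EuclideanSpace ℝ (Fin 4)),
      ⟪fderiv ℝ (fun y => fderiv ℝ X y) x w u, v⟫
        + ⟪fderiv ℝ (fun y => fderiv ℝ X y) x w v, u⟫ = 0 := by
    intro x u v w
    set D := fderiv ℝ (fun y => fderiv ℝ X y) x with hDdef
    have hD : HasFDerivAt (fun y => fderiv ℝ X y) D x := (hX'd x).hasFDerivAt
    set φ : ((EuclideanSpace ℝ (Fin 4)) →L[ℝ] (EuclideanSpace ℝ (Fin 4))) →L[ℝ] ℝ :=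
      ((innerSL ℝ v).comp (ContinuousLinearMap.apply ℝ (EuclideanSpace ℝ (Fin 4)) u))
        + ((innerSL ℝ u).comp (ContinuousLinearMap.apply ℝ (EuclideanSpace ℝ (Fin 4)) v)) with hφ
    have h1 : HasFDerivAt (fun y => φ (fderiv ℝ X y)) (φ.comp D) x :=
      φ.hasFDerivAt.comp x hD
    have h2 : (fun y => φ (fderiv ℝ X y)) = fun _ => (0 : ℝ) := by
      funext y
      simp only [hφ, ContinuousLinearMap.add_apply, ContinuousLinearMap.comp_apply,
        ContinuousLinearMap.apply_apply, innerSL_apply_apply]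
      rw [real_inner_comm ((fderiv ℝ X y) u) v, real_inner_comm ((fderiv ℝ X y) v) u]
      exact hskew y u v
    rw [h2] at h1
    have h0 : HasFDerivAt (fun _ : (EuclideanSpace ℝ (Fin 4)) => (0 : ℝ)) 0 x := hasFDerivAt_const (𝕜 := ℝ) (0 : ℝ) x
    have hφD : φ.comp D = 0 := h1.unique h0
    have := congrArg (fun (L : (EuclideanSpace ℝ (Fin 4)) →L[ℝ] ℝ) => L w) hφD
    simp only [hφ, ContinuousLinearMap.comp_apply, ContinuousLinearMap.add_apply,
      ContinuousLinearMap.apply_apply, innerSL_apply_apply, ContinuousLinearMap.zero_apply] at this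
    rw [real_inner_comm v (D w u), real_inner_comm u (D w v)]
    exact this
  -- the second derivative vanishes
  have hDzero : ∀ x, fderiv ℝ (fun y => fderiv ℝ X y) x = 0 := by
    intro x
    set D := fderiv ℝ (fun y => fderiv ℝ X y) x with hDdef
    have hD : HasFDerivAt (fun y => fderiv ℝ X y) D x := (hX'd x).hasFDerivAt
    have hsymm : ∀ a b : (EuclideanSpace ℝ (Fin 4)), D a b = D b a :=
      second_derivative_symmetric (fun y => (hX1 y).hasFDerivAt) hD
    have hsk : ∀ a b c : (EuclideanSpace ℝ (Fin 4)), ⟪D a b, c⟫ = -⟪D a c, b⟫ := by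
      intro a b c
      have := key x b c a
      linarith
    have hT : ∀ a b c : (EuclideanSpace ℝ (Fin 4)), ⟪D a b, c⟫ = 0 := by
      intro a b c
      have hchain : ⟪D a b, c⟫ = -⟪D a b, c⟫ := by
        calc ⟪D a b, c⟫ = -⟪D a c, b⟫ := hsk a b c
          _ = -⟪D c a, b⟫ := by rw [hsymm a c]
          _ = ⟪D c b, a⟫ := by rw [hsk c a b]; ring
          _ = ⟪D b c, a⟫ := by rw [hsymm c b]
          _ = -⟪D b a, c⟫ := hsk b c a
          _ = -⟪D a b, c⟫ := by rw [hsymm b a]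
      linarith
    refine ContinuousLinearMap.ext fun a => ContinuousLinearMap.ext fun b => ?_
    have := hT a b (D a b)
    simpa using inner_self_eq_zero.mp this
  -- hence the derivative is constant
  intro p hp
  set A := fderiv ℝ X p with hAdef
  have hconst : ∀ x, fderiv ℝ X x = A :=
    fun x => is_const_of_fderiv_eq_zero hX'd hDzero x p
  -- X x = A (x - p)
  have haff : ∀ x, X x = A (x - p) := by
    have hg' : ∀ x : (EuclideanSpace ℝ (Fin 4)), HasFDerivAt (fun y => X y - A (y - p)) (0 : EuclideanSpace ℝ (Fin 4) →L[ℝ] EuclideanSpace ℝ (Fin 4)) x := by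
      intro x
      have h1 : HasFDerivAt X A x := by
        have := (hX1 x).hasFDerivAt
        rwa [hconst x] at this
      have h2 : HasFDerivAt (fun y : (EuclideanSpace ℝ (Fin 4)) => A (y - p)) A x := by
        have h := A.hasFDerivAt.comp x ((hasFDerivAt_id x).sub_const p)
        simpa only [Function.comp_def, ContinuousLinearMap.comp_id, id] using h
      have h3 := h1.sub h2
      rwa [sub_self] at h3
    intro x
    have hconst2 : (fun y => X y - A (y - p)) x = (fun y => X y - A (y - p)) p :=
      is_const_of_fderiv_eq_zero (fun y => (hg' y).differentiableAt)
        (fun y => (hg' y).fderiv) x p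
    have hXp : X p = 0 := hW p hp
    simp only [hXp, sub_self, map_zero, sub_zero] at hconst2
    exact sub_eq_zero.mp hconst2
  -- skewness of A
  have hA_skew : ∀ u v : (EuclideanSpace ℝ (Fin 4)), ⟪A u, v⟫ = -⟪A v, u⟫ := by
    intro u v
    have := hskew p u v
    linarith
  have hAne : A ≠ 0 := by
    intro h0
    exact hnz fun x => by rw [haff x, h0]; rfl
  -- kernel contains the direction
  have hker : W.direction ≤ LinearMap.ker A.toLinearMap := by
    intro v hv
    obtain ⟨q, hq, rfl⟩ := (AffineSubspace.mem_direction_iff_eq_vsub_right hp v).mp hv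
    have : A (q - p) = 0 := (haff q).symm.trans (hW q hq)
    simpa using this
  have hfin : Module.finrank ℝ (EuclideanSpace ℝ (Fin 4)) = 4 := by
    simpa using finrank_euclideanSpace (𝕜 := ℝ) (n := Fin 4)
  have hrn : Module.finrank ℝ (LinearMap.range A.toLinearMap)
      + Module.finrank ℝ (LinearMap.ker A.toLinearMap) = 4 :=
    (LinearMap.finrank_range_add_finrank_ker A.toLinearMap).trans hfin
  have hker2 : 2 ≤ Module.finrank ℝ (LinearMap.ker A.toLinearMap) := by
    rw [← hdim]; exact Submodule.finrank_mono hker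
  have hrle : Module.finrank ℝ (LinearMap.range A.toLinearMap) ≤ 2 := by omega
  have hrne0 : Module.finrank ℝ (LinearMap.range A.toLinearMap) ≠ 0 := by
    intro h0
    apply hAne
    have : LinearMap.range A.toLinearMap = ⊥ := Submodule.finrank_eq_zero.mp h0
    have hbot := LinearMap.range_eq_bot.mp this
    refine ContinuousLinearMap.ext fun v => ?_
    simpa using LinearMap.congr_fun hbot v
  have hrne1 : Module.finrank ℝ (LinearMap.range A.toLinearMap) ≠ 1 := by
    intro h1
    obtain ⟨u, hu⟩ : ∃ u, A u ≠ 0 := by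
      by_contra h
      push_neg at h
      exact hAne (ContinuousLinearMap.ext h)
    set w := A u with hw
    have hwmem : w ∈ LinearMap.range A.toLinearMap := ⟨u, rfl⟩
    have hle : (ℝ ∙ w) ≤ LinearMap.range A.toLinearMap :=
      (Submodule.span_singleton_le_iff_mem w _).mpr hwmem
    have hspan : (ℝ ∙ w) = LinearMap.range A.toLinearMap :=
      Submodule.eq_of_le_of_finrank_eq hle (by rw [finrank_span_singleton hu, h1])
    have hmem : ∀ v : (EuclideanSpace ℝ (Fin 4)), ∃ c : ℝ, A v = c • w := by
      intro v
      have : A v ∈ (ℝ ∙ w) := hspan ▸ (⟨v, rfl⟩ : A v ∈ LinearMap.range A.toLinearMap)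
      obtain ⟨c, hc⟩ := Submodule.mem_span_singleton.mp this
      exact ⟨c, hc.symm⟩
    have hww : ⟪w, w⟫ ≠ 0 := fun h => hu (inner_self_eq_zero.mp h)
    have hAw : A w = 0 := by
      obtain ⟨c, hc⟩ := hmem w
      have h1' : ⟪A w, w⟫ = 0 := by have := hA_skew w w; linarith
      rw [hc, real_inner_smul_left] at h1'
      have hc0 : c = 0 := by
        rcases mul_eq_zero.mp h1' with h | h
        · exact h
        · exact absurd h hww
      rw [hc, hc0, zero_smul]
    apply hAne
    refine ContinuousLinearMap.ext fun v => ?_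
    obtain ⟨c, hc⟩ := hmem v
    have h2 : ⟪A v, w⟫ = 0 := by
      have := hA_skew v w
      rw [hAw] at this
      simpa using this
    rw [hc, real_inner_smul_left] at h2
    have hc0 : c = 0 := by
      rcases mul_eq_zero.mp h2 with h | h
      · exact h
      · exact absurd h hww
    simp [hc, hc0]
  have hr2 : Module.finrank ℝ (LinearMap.range A.toLinearMap) = 2 := by omega
  have hk2 : Module.finrank ℝ (LinearMap.ker A.toLinearMap) = 2 := by omega
  refine ⟨haff, hr2, ?_⟩
  exact (Submodule.eq_of_le_of_finrank_eq hker (by rw [hdim, hk2])).symm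
end

section
/- Let E be a finite-dimensional real inner product space and let A : E →ₗ[ℝ] E be skew-adjoint, i.e. ⟪A u, v⟫ = −⟪u, A v⟫ for all u, v ∈ E, with rank at most 2, i.e. finrank ℝ (LinearMap.range A) ≤ 2. Then for all vectors x, u, v, w in E: ⟪A x, u⟫ * ⟪A v, w⟫ − ⟪A x, v⟫ * ⟪A u, w⟫ + ⟪A x, w⟫ * ⟪A u, v⟫ = 0. -/
/-!
Since `range A` has dimension at most 2, the vectors `A u, A v, A w` satisfy a nontrivial
relation `α • A u + β • A v + γ • A w = 0`. Pairing it with `u`, `v`, `w` and using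
`⟪A z, z⟫ = 0` shows that `(α, β, γ)` is proportional to
`(⟪A v, w⟫, ⟪A w, u⟫, ⟪A u, v⟫)`, so `⟪A v, w⟫ • A u + ⟪A w, u⟫ • A v + ⟪A u, v⟫ • A w = 0`;
pairing this with `x` gives the identity.
-/

open scoped RealInnerProductSpace

theorem LinearMap.not_linearIndependent_comp_of_finrank_range_lt {K V W ι : Type*}
    [DivisionRing K] [AddCommGroup V] [Module K V] [AddCommGroup W] [Module K W]
    [FiniteDimensional K W] [Fintype ι] (A : V →ₗ[K] W)
    (hrank : Module.finrank K (LinearMap.range A) < Fintype.card ι) (f : ι → V) :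
    ¬ LinearIndependent K (A ∘ f) := fun hli =>
  ((hli.of_comp (v := A.rangeRestrict ∘ f) (LinearMap.range A).subtype)
    |>.fintype_card_le_finrank).not_gt hrank

section Skew

variable {E : Type*} [NormedAddCommGroup E] [InnerProductSpace ℝ E] {A : E →ₗ[ℝ] E}

theorem inner_apply_self_eq_zero_of_skew (hskew : ∀ u v : E, ⟪A u, v⟫ = -⟪u, A v⟫) (z : E) :
    ⟪A z, z⟫ = 0 := by
  linarith [hskew z z, real_inner_comm z (A z)]

theorem inner_apply_swap_of_skew (hskew : ∀ u v : E, ⟪A u, v⟫ = -⟪u, A v⟫) (u v : E) :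
    ⟪A u, v⟫ = -⟪A v, u⟫ := by
  rw [hskew, real_inner_comm]

theorem smul_cyclic_sum_eq_zero_of_skew (hskew : ∀ u v : E, ⟪A u, v⟫ = -⟪u, A v⟫)
    {u v w : E} {α β γ : ℝ} (hdep : α • A u + β • A v + γ • A w = 0) :
    α • (⟪A v, w⟫ • A u + ⟪A w, u⟫ • A v + ⟪A u, v⟫ • A w) = 0 ∧
    β • (⟪A v, w⟫ • A u + ⟪A w, u⟫ • A v + ⟪A u, v⟫ • A w) = 0 ∧
    γ • (⟪A v, w⟫ • A u + ⟪A w, u⟫ • A v + ⟪A u, v⟫ • A w) = 0 := by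
  have pair (z : E) : α * ⟪A u, z⟫ + β * ⟪A v, z⟫ + γ * ⟪A w, z⟫ = 0 := by
    simpa only [inner_add_left, real_inner_smul_left, inner_zero_left] using
      congrArg (⟪·, z⟫) hdep
  have hu := pair u
  have hv := pair v
  have hw := pair w
  simp only [inner_apply_self_eq_zero_of_skew hskew] at hu hv hw
  rw [inner_apply_swap_of_skew hskew v u] at hu
  rw [inner_apply_swap_of_skew hskew w v] at hv
  rw [inner_apply_swap_of_skew hskew u w] at hw
  refine ⟨?_, ?_, ?_⟩
  · linear_combination (norm := module) ⟪A v, w⟫ • hdep - hw • A v + hv • A w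
  · linear_combination (norm := module) ⟪A w, u⟫ • hdep + hw • A u - hu • A w
  · linear_combination (norm := module) ⟪A u, v⟫ • hdep - hv • A u + hu • A v

theorem cyclic_sum_eq_zero_of_skew_of_finrank_range_le_two [FiniteDimensional ℝ E]
    (hskew : ∀ u v : E, ⟪A u, v⟫ = -⟪u, A v⟫)
    (hrank : Module.finrank ℝ (LinearMap.range A) ≤ 2) (u v w : E) :
    ⟪A v, w⟫ • A u + ⟪A w, u⟫ • A v + ⟪A u, v⟫ • A w = 0 := by
  obtain ⟨g, hdep, i, hi⟩ := Fintype.not_linearIndependent_iff.mp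
    (A.not_linearIndependent_comp_of_finrank_range_lt (hrank.trans_lt (by simp)) ![u, v, w])
  simp only [Fin.sum_univ_three, Function.comp_apply, Matrix.cons_val_zero, Matrix.cons_val_one,
    Matrix.cons_val_two, Matrix.head_cons, Matrix.tail_cons] at hdep
  obtain ⟨h0, h1, h2⟩ := smul_cyclic_sum_eq_zero_of_skew hskew hdep
  fin_cases i
  · exact (smul_eq_zero.mp h0).resolve_left hi
  · exact (smul_eq_zero.mp h1).resolve_left hi
  · exact (smul_eq_zero.mp h2).resolve_left hi

end Skew

/-- For a skew-adjoint endomorphism of rank at most 2 on a finite-dimensional real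
inner product space, the trilinear expression corresponding to `X_♭ ∧ dX_♭` vanishes. -/
theorem skew_adjoint_rank_le_two_trilinear_vanishes
    (E : Type*) [NormedAddCommGroup E] [InnerProductSpace ℝ E]
    [FiniteDimensional ℝ E]
    (A : E →ₗ[ℝ] E)
    (hskew : ∀ u v : E, ⟪A u, v⟫ = -⟪u, A v⟫)
    (hrank : Module.finrank ℝ (LinearMap.range A) ≤ 2) :
    ∀ x u v w : E,
      ⟪A x, u⟫ * ⟪A v, w⟫ - ⟪A x, v⟫ * ⟪A u, w⟫ + ⟪A x, w⟫ * ⟪A u, v⟫ = 0 := by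
  intro x u v w
  have h := congrArg (⟪·, x⟫)
    (cyclic_sum_eq_zero_of_skew_of_finrank_range_le_two hskew hrank u v w)
  simp only [inner_add_left, real_inner_smul_left, inner_zero_left] at h
  rw [inner_apply_swap_of_skew hskew u x, inner_apply_swap_of_skew hskew v x,
    inner_apply_swap_of_skew hskew w x, inner_apply_swap_of_skew hskew w u] at h
  linear_combination -h
end
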